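/- Let R be a reduced commutative ring with identity which is not an integral domain. Then the annihilator-ideal graph A_I(R) equals the annihilating-ideal graph 𝔸𝔾(R) if and only if A_I(R) and 𝔸𝔾(R) have equal girth and this common girth is either 4 or ∞ (i.e., the graphs either have girth 4 or contain no cycles). -/

import Mathlib

/-!
`𝔸𝔾(R)` is always a subgraph of `A_I(R)`. In a reduced ring, an `A_I`-edge `U — V` with
`UV ≠ 0` yields the `𝔸𝔾`-triangle `xU, xV, UV`, where `x` kills `UV` but neither `U` nor `V`;
conversely an `𝔸𝔾`-triangle `I, J, K` yields the `A_I`-edge `J + I — J + K`, which is not an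
`𝔸𝔾`-edge because its product contains `J²` (the two ends differ, as `I ≤ J + K` would force
`I² = 0`). So the graphs coincide iff `𝔸𝔾(R)` is triangle-free, i.e. has girth at least `4`.
Moreover `𝔸𝔾(R)` of any ring has girth `≤ 4` as soon as it has a cycle: if a shortest cycle
`v₀ v₁ v₂ v₃ v₄ …` had length `≥ 5`, then `v₁v₃, v₂, v₃, v₄` would be a `4`-cycle.
-/

/-- The vertex set of the annihilator-ideal/annihilating-ideal graphs:
nonzero ideals with nonzero annihilator. -/
abbrev AnnVert (R : Type*) [CommRing R] : Type _ :=
  {I : Ideal R // I ≠ ⊥ ∧ Submodule.annihilator I ≠ ⊥}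

/-- The annihilator-ideal graph `A_I(R)`. -/
def annihilatorIdealGraph (R : Type*) [CommRing R] : SimpleGraph (AnnVert R) where
  Adj I J := I ≠ J ∧
    ((Submodule.annihilator (I.1 * J.1) : Ideal R) : Set R) ≠
      ↑(Submodule.annihilator I.1) ∪ ↑(Submodule.annihilator J.1)
  symm := by
    constructor
    rintro I J ⟨hne, h⟩
    exact ⟨hne.symm, by rwa [mul_comm, Set.union_comm]⟩
  loopless := by constructor; rintro I ⟨h, -⟩; exact h rfl

/-- The annihilating-ideal graph `𝔸𝔾(R)`. -/
def annihilatingIdealGraph (R : Type*) [CommRing R] : SimpleGraph (AnnVert R) where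
  Adj I J := I ≠ J ∧ I.1 * J.1 = ⊥
  symm := by constructor; rintro I J ⟨hne, h⟩; exact ⟨hne.symm, by rwa [mul_comm]⟩
  loopless := by constructor; rintro I ⟨h, -⟩; exact h rfl

/-- `G` is a complete bipartite graph with parts `s` and `t`. -/
def SimpleGraph.IsCompleteBipartiteWith {V : Type*} (G : SimpleGraph V) (s t : Set V) : Prop :=
  Disjoint s t ∧ s ∪ t = Set.univ ∧
    ∀ u v, G.Adj u v ↔ (u ∈ s ∧ v ∈ t) ∨ (u ∈ t ∧ v ∈ s)

/-- `G` is a star graph: complete bipartite with one part a single vertex and the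
other part nonempty. -/
def SimpleGraph.IsStarGraph {V : Type*} (G : SimpleGraph V) : Prop :=
  ∃ (c : V) (t : Set V), t.Nonempty ∧ G.IsCompleteBipartiteWith {c} t

namespace SimpleGraph

variable {V : Type*} {G : SimpleGraph V}

lemma four_le_egirth_iff : 4 ≤ G.egirth ↔ G.CliqueFree 3 := by
  constructor
  · intro h s hs
    obtain ⟨a, w, hw, hlen⟩ := is3Clique_iff_exists_cycle_length_three.mp ⟨s, hs⟩
    have := h.trans (egirth_le_length hw)
    rw [hlen] at this
    norm_num at this
  · intro h
    rw [le_egirth]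
    intro a w hw
    have h3 := hw.three_le_length
    have : w.length ≠ 3 := fun hlen =>
      (is3Clique_iff_exists_cycle_length_three.mpr ⟨a, w, hw, hlen⟩).elim h
    exact_mod_cast (by omega : 4 ≤ w.length)

lemma egirth_le_four_of_adj {a b c d : V} (hab : G.Adj a b) (hbc : G.Adj b c) (hcd : G.Adj c d)
    (hda : G.Adj d a) (hac : a ≠ c) (hbd : b ≠ d) : G.egirth ≤ 4 := by
  have hw : (Walk.cons hab (.cons hbc (.cons hcd (.cons hda .nil)))).IsCycle := by
    simp [Walk.isCycle_def, Walk.isTrail_def, hab.ne, hbc.ne, hcd.ne, hda.ne, hab.ne', hda.ne',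
      hac, hbd, hac.symm]
  simpa using egirth_le_length hw

lemma exists_chordless_path_of_four_lt_egirth (hG : ¬G.IsAcyclic) (h : 4 < G.egirth) :
    ∃ v : ℕ → V, (∀ i < 4, G.Adj (v i) (v (i + 1))) ∧
      (∀ i j, i < j → j ≤ 4 → v i ≠ v j) ∧
      (∀ i j, i + 2 ≤ j → j ≤ i + 3 → j ≤ 4 → ¬G.Adj (v i) (v j)) := by
  classical
  obtain ⟨a, w, hw, hlen⟩ := exists_egirth_eq_length.mpr hG
  have hlen4 : 4 < w.length := by exact_mod_cast hlen ▸ h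
  have hadj : ∀ i < 4, G.Adj (w.getVert i) (w.getVert (i + 1)) := fun i hi =>
    w.adj_getVert_succ (by omega)
  have hne : ∀ i j, i < j → j ≤ 4 → w.getVert i ≠ w.getVert j := fun i j hij hj he =>
    hij.ne (hw.getVert_injOn' (by simp; omega) (by simp; omega) he)
  refine ⟨w.getVert, hadj, hne, fun i j hi hj hj4 hij => ?_⟩
  rcases (by omega : j = i + 2 ∨ j = i + 3) with rfl | rfl
  · exact four_le_egirth_iff.mp h.le {w.getVert i, w.getVert (i + 1), w.getVert (i + 2)}
      (is3Clique_triple_iff.mpr ⟨hadj i (by omega), hij, hadj (i + 1) (by omega)⟩)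
  · refine lt_irrefl _ (h.trans_le ?_)
    exact egirth_le_four_of_adj (hadj i (by omega)) (hadj (i + 1) (by omega))
      (hadj (i + 2) (by omega)) hij.symm (hne i (i + 2) (by omega) (by omega))
      (hne (i + 1) (i + 3) (by omega) (by omega))

end SimpleGraph

open SimpleGraph

namespace Ideal

variable {R : Type*} [CommRing R] {I J : Ideal R}

lemma le_annihilator_iff_mul_eq_bot : J ≤ Submodule.annihilator I ↔ I * J = ⊥ := by
  rw [Submodule.le_annihilator_iff, smul_eq_mul, mul_comm]

lemma mem_annihilator_iff_mul_span_singleton_eq_bot {x : R} :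
    x ∈ Submodule.annihilator I ↔ I * span {x} = ⊥ := by
  rw [← span_singleton_le_iff_mem, le_annihilator_iff_mul_eq_bot]

lemma annihilator_ne_bot_of_mul_eq_bot (hJ : J ≠ ⊥) (h : I * J = ⊥) :
    Submodule.annihilator I ≠ ⊥ :=
  ne_bot_of_le_ne_bot hJ (le_annihilator_iff_mul_eq_bot.mpr h)

variable [IsReduced R]

lemma mul_self_ne_bot (hI : I ≠ ⊥) : I * I ≠ ⊥ := by
  rwa [← sq, Ne, pow_eq_bot two_ne_zero]

lemma ne_of_mul_eq_bot (hI : I ≠ ⊥) (h : I * J = ⊥) : I ≠ J := by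
  rintro rfl
  exact mul_self_ne_bot hI h

end Ideal

section AnnihilatorGraphs

open Ideal

variable {R : Type*} [CommRing R]

lemma annihilatingIdealGraph_le_annihilatorIdealGraph :
    annihilatingIdealGraph R ≤ annihilatorIdealGraph R := by
  rintro U V ⟨hne, hUV⟩
  refine ⟨hne, fun h => ?_⟩
  rw [hUV, Submodule.annihilator_bot] at h
  rcases subset_union.mp h.le with hU | hU
  · exact U.2.1 (Submodule.annihilator_eq_top_iff.mp (top_le_iff.mp hU))
  · exact V.2.1 (Submodule.annihilator_eq_top_iff.mp (top_le_iff.mp hU))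

lemma annihilatingIdealGraph_egirth_le_four (hG : ¬(annihilatingIdealGraph R).IsAcyclic) :
    (annihilatingIdealGraph R).egirth ≤ 4 := by
  by_contra h4
  obtain ⟨v, hadj, hne, hchord⟩ := exists_chordless_path_of_four_lt_egirth hG (not_le.mp h4)
  have hmul : ∀ i j, i + 2 ≤ j → j ≤ i + 3 → j ≤ 4 → (v i).1 * (v j).1 ≠ ⊥ :=
    fun i j hij hji hj h => hchord i j hij hji hj ⟨hne i j (by omega) hj, h⟩
  have h0K : (v 0).1 * ((v 1).1 * (v 3).1) = ⊥ := by
    rw [← mul_assoc, (hadj 0 (by norm_num)).2, bot_mul]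
  have h2K : (v 2).1 * ((v 1).1 * (v 3).1) = ⊥ := by
    rw [mul_left_comm, ← mul_assoc, (hadj 1 (by norm_num)).2, bot_mul]
  have h4K : (v 4).1 * ((v 1).1 * (v 3).1) = ⊥ := by
    rw [mul_left_comm, mul_comm (v 4).1, (hadj 3 (by norm_num)).2, mul_bot]
  let k : AnnVert R := ⟨(v 1).1 * (v 3).1, hmul 1 3 le_rfl (by norm_num) (by norm_num),
    annihilator_ne_bot_of_mul_eq_bot (v 2).2.1 (by rwa [mul_comm])⟩
  have hk2 : k ≠ v 2 := fun e => hmul 0 2 le_rfl (by norm_num) (by norm_num) (e ▸ h0K)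
  have hk3 : k ≠ v 3 := fun e => hmul 0 3 (by norm_num) le_rfl (by norm_num) (e ▸ h0K)
  have hk4 : k ≠ v 4 := fun e => hmul 2 4 le_rfl (by norm_num) le_rfl (e ▸ h2K)
  exact h4 <| egirth_le_four_of_adj (a := k) ⟨hk2, by rw [mul_comm]; exact h2K⟩
    (hadj 2 (by norm_num)) (hadj 3 (by norm_num)) ⟨hk4.symm, h4K⟩ hk3
    (hne 2 4 (by norm_num) le_rfl)

variable [IsReduced R]

lemma not_cliqueFree_three_of_mul_eq_bot {I J K : Ideal R} (hI : I ≠ ⊥) (hJ : J ≠ ⊥)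
    (hK : K ≠ ⊥) (hIJ : I * J = ⊥) (hIK : I * K = ⊥) (hJK : J * K = ⊥) :
    ¬(annihilatingIdealGraph R).CliqueFree 3 := by
  classical
  let a : AnnVert R := ⟨I, hI, annihilator_ne_bot_of_mul_eq_bot hJ hIJ⟩
  let b : AnnVert R := ⟨J, hJ, annihilator_ne_bot_of_mul_eq_bot hK hJK⟩
  let c : AnnVert R := ⟨K, hK, annihilator_ne_bot_of_mul_eq_bot hI (by rwa [mul_comm])⟩
  refine fun h => h {a, b, c} (is3Clique_triple_iff.mpr ⟨⟨?_, hIJ⟩, ⟨?_, hIK⟩, ⟨?_, hJK⟩⟩)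
  · exact (ne_of_mul_eq_bot hI hIJ <| congrArg Subtype.val ·)
  · exact (ne_of_mul_eq_bot hI hIK <| congrArg Subtype.val ·)
  · exact (ne_of_mul_eq_bot hJ hJK <| congrArg Subtype.val ·)

lemma annihilatingIdealGraph_adj_of_cliqueFree (h3 : (annihilatingIdealGraph R).CliqueFree 3)
    {U V : AnnVert R} (h : (annihilatorIdealGraph R).Adj U V) :
    (annihilatingIdealGraph R).Adj U V := by
  refine ⟨h.1, by_contra fun hUV => ?_⟩
  have hsub : (Submodule.annihilator U.1 : Set R) ∪ Submodule.annihilator V.1 ⊆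
      Submodule.annihilator (U.1 * V.1) :=
    Set.union_subset (Submodule.annihilator_mono mul_le_left)
      (Submodule.annihilator_mono mul_le_right)
  obtain ⟨x, hx, hxUV⟩ := Set.not_subset.mp fun h' => h.2 (h'.antisymm hsub)
  simp only [Set.mem_union, not_or, SetLike.mem_coe,
    mem_annihilator_iff_mul_span_singleton_eq_bot] at hx hxUV
  set X := span {x}
  refine not_cliqueFree_three_of_mul_eq_bot (I := U.1 * X) (J := V.1 * X) (K := U.1 * V.1)
    hxUV.1 hxUV.2 hUV ?_ ?_ ?_ h3
  · calc U.1 * X * (V.1 * X) = U.1 * V.1 * X * X := by ring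
      _ = ⊥ := by rw [hx, bot_mul]
  · calc U.1 * X * (U.1 * V.1) = U.1 * V.1 * X * U.1 := by ring
      _ = ⊥ := by rw [hx, bot_mul]
  · calc V.1 * X * (U.1 * V.1) = U.1 * V.1 * X * V.1 := by ring
      _ = ⊥ := by rw [hx, bot_mul]

lemma annihilatorIdealGraph_ne_of_mul_eq_bot {C P Q : Ideal R} (hC : C ≠ ⊥) (hP : P ≠ ⊥)
    (hQ : Q ≠ ⊥) (hCP : C * P = ⊥) (hCQ : C * Q = ⊥) (hPQ : P * Q = ⊥) (hne : C + P ≠ C + Q) :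
    annihilatorIdealGraph R ≠ annihilatingIdealGraph R := by
  have hUQ : (C + P) * Q = ⊥ := by simp [Ideal.sup_mul, hCQ, hPQ]
  have hVP : (C + Q) * P = ⊥ := by simp [Ideal.sup_mul, hCP, mul_comm Q P, hPQ]
  let U : AnnVert R := ⟨C + P, ne_bot_of_le_ne_bot hC le_sup_left,
    annihilator_ne_bot_of_mul_eq_bot hQ hUQ⟩
  let V : AnnVert R := ⟨C + Q, ne_bot_of_le_ne_bot hC le_sup_left,
    annihilator_ne_bot_of_mul_eq_bot hP hVP⟩
  have hUV : (C + P) * (C + Q) = C * C := by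
    simp [Ideal.sup_mul, Ideal.mul_sup, hCQ, hPQ, mul_comm P C, hCP]
  have hadj : (annihilatorIdealGraph R).Adj U V := by
    refine ⟨(hne <| congrArg Subtype.val ·), fun hann => ?_⟩
    -- `P + Q` kills `(C + P) * (C + Q) = C * C`, yet neither `C + P` nor `C + Q`.
    have hle : P + Q ≤ Submodule.annihilator (U.1 * V.1) := by
      rw [le_annihilator_iff_mul_eq_bot]
      change (C + P) * (C + Q) * (P + Q) = ⊥
      rw [hUV, mul_assoc]
      simp [Ideal.mul_sup, hCP, hCQ]
    rcases subset_union.mp (hann ▸ SetLike.coe_subset_coe.mpr hle) with h | h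
    · exact mul_self_ne_bot hP <| le_annihilator_iff_mul_eq_bot.mp <|
        le_sup_left.trans h |>.trans (Submodule.annihilator_mono le_sup_right)
    · exact mul_self_ne_bot hQ <| le_annihilator_iff_mul_eq_bot.mp <|
        le_sup_right.trans h |>.trans (Submodule.annihilator_mono le_sup_right)
  intro h
  exact mul_self_ne_bot hC (hUV ▸ (h ▸ hadj).2)

lemma cliqueFree_three_of_annihilatorIdealGraph_eq
    (h : annihilatorIdealGraph R = annihilatingIdealGraph R) :
    (annihilatingIdealGraph R).CliqueFree 3 := by
  classical
  intro s hs
  obtain ⟨a, b, c, hab, hac, hbc, -⟩ := is3Clique_iff.mp hs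
  refine annihilatorIdealGraph_ne_of_mul_eq_bot b.2.1 a.2.1 c.2.1 (by rw [mul_comm]; exact hab.2)
    hbc.2 hac.2 (fun hsum => mul_self_ne_bot a.2.1 (le_bot_iff.mp ?_)) h
  calc a.1 * a.1 ≤ a.1 * (b.1 + c.1) := mul_mono_right (hsum ▸ le_sup_right)
    _ = ⊥ := by simp [Ideal.mul_sup, hab.2, hac.2]

lemma annihilatorIdealGraph_eq_iff_cliqueFree :
    annihilatorIdealGraph R = annihilatingIdealGraph R ↔
      (annihilatingIdealGraph R).CliqueFree 3 :=
  ⟨cliqueFree_three_of_annihilatorIdealGraph_eq, fun h3 =>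
    le_antisymm (fun _ _ => annihilatingIdealGraph_adj_of_cliqueFree h3)
      annihilatingIdealGraph_le_annihilatorIdealGraph⟩

end AnnihilatorGraphs

theorem stmt11_general (R : Type*) [CommRing R] [IsReduced R] :
    annihilatorIdealGraph R = annihilatingIdealGraph R ↔
      ((annihilatorIdealGraph R).egirth = (annihilatingIdealGraph R).egirth ∧
        ((annihilatorIdealGraph R).egirth = 4 ∨ (annihilatorIdealGraph R).egirth = ⊤)) := by
  constructor
  · intro h
    have h3 := annihilatorIdealGraph_eq_iff_cliqueFree.mp h
    rw [h]
    refine ⟨rfl, ?_⟩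
    by_cases hG : (annihilatingIdealGraph R).IsAcyclic
    · exact Or.inr (egirth_eq_top.mpr hG)
    · exact Or.inl (le_antisymm (annihilatingIdealGraph_egirth_le_four hG)
        (four_le_egirth_iff.mpr h3))
  · rintro ⟨-, h4⟩
    refine annihilatorIdealGraph_eq_iff_cliqueFree.mpr <|
      CliqueFree.anti annihilatingIdealGraph_le_annihilatorIdealGraph <| four_le_egirth_iff.mp ?_
    rcases h4 with h4 | h4 <;> simp [h4]

theorem stmt11 (R : Type*) [CommRing R] [Nontrivial R] [IsReduced R] (hdom : ¬IsDomain R) :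
    annihilatorIdealGraph R = annihilatingIdealGraph R ↔
      ((annihilatorIdealGraph R).egirth = (annihilatingIdealGraph R).egirth ∧
        ((annihilatorIdealGraph R).egirth = 4 ∨ (annihilatorIdealGraph R).egirth = ⊤)) :=
  stmt11_general R
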